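/- arXiv:2601.11679 — 6 statements merged into one kernel-verified Lean document; each statement's English description precedes it below -/
import Mathlib

section
/- Let K be an invertible 3×3 real matrix whose third row is (0,0,1), D = diag(1,1,−1), C = K⁻ᵀ D K⁻¹, S = K D K⁻¹. Let x₁, x₂ ∈ ℝ² be affine image points with homogeneous lifts x̂₁, x̂₂, let θ be the angle between the rays K⁻¹x̂₁ and K⁻¹x̂₂, and let l₁ = C S x̂₁ and l₂ = C S x̂₂ be the reflected polars, regarded as lines in ℝ². If x₁ does not lie on l₁ and x₂ does not lie on l₂, then cos²θ = (dist(x₁, l₂) · dist(x₂, l₁)) / (dist(x₁, l₁) · dist(x₂, l₂)), where dist denotes Euclidean distance from a point of ℝ² to a line of ℝ². -/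
/-!
Since `D² = 1`, the product `C S` collapses to `K⁻ᵀ K⁻¹`, so the reflected polar `lᵢ` of `xᵢ`
pairs with a lift `ŷ` as `lᵢ ⬝ ŷ = ⟨K⁻¹x̂ᵢ, K⁻¹ŷ⟩`. The distance from `xⱼ` to `lᵢ` is
`|lᵢ ⬝ x̂ⱼ|` divided by the norm of the normal of `lᵢ`; in the ratio these norms cancel,
leaving `⟨v₁, v₂⟩² / (‖v₁‖² ‖v₂‖²) = cos²θ` with `vᵢ = K⁻¹x̂ᵢ`.
-/

open Matrix

/-- The homogeneous lift `(y₁, y₂, 1)` of an affine image point `y ∈ ℝ²`. -/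
def homLift (y : Fin 2 → ℝ) : Fin 3 → ℝ := ![y 0, y 1, 1]

/-- Euclidean distance from a point `y ∈ ℝ²` to the line represented by `l ∈ ℝ³`. -/
noncomputable def distPtLine (l : Fin 3 → ℝ) (y : Fin 2 → ℝ) : ℝ :=
  |l 0 * y 0 + l 1 * y 1 + l 2| / Real.sqrt ((l 0) ^ 2 + (l 1) ^ 2)

namespace Matrix

variable {n R : Type*} [Fintype n] [CommRing R]

theorem transpose_mul_self_mulVec_dotProduct (A : Matrix n n R) (u w : n → R) :
    (Aᵀ * A) *ᵥ u ⬝ᵥ w = A *ᵥ u ⬝ᵥ A *ᵥ w := by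
  rw [← mulVec_mulVec, mulVec_transpose, dotProduct_mulVec]

variable [DecidableEq n]

theorem transpose_inv_mul_mul_inv_mul_mul_mul_inv {K D : Matrix n n R} (hK : IsUnit K.det)
    (hD : D * D = 1) : Kᵀ⁻¹ * D * K⁻¹ * (K * D * K⁻¹) = K⁻¹ᵀ * K⁻¹ := by
  rw [transpose_nonsing_inv]
  calc Kᵀ⁻¹ * D * K⁻¹ * (K * D * K⁻¹) = Kᵀ⁻¹ * D * (K⁻¹ * (K * (D * K⁻¹))) := by
        simp only [Matrix.mul_assoc]
    _ = Kᵀ⁻¹ * (D * D) * K⁻¹ := by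
        rw [nonsing_inv_mul_cancel_left K (D * K⁻¹) hK]; simp only [Matrix.mul_assoc]
    _ = Kᵀ⁻¹ * K⁻¹ := by rw [hD, Matrix.mul_one]

end Matrix

theorem cos_sq_angle_toLp {ι : Type*} [Fintype ι] (a b : ι → ℝ) :
    Real.cos (InnerProductGeometry.angle (WithLp.toLp 2 a) (WithLp.toLp 2 b)) ^ 2 =
      (a ⬝ᵥ b) ^ 2 / ((a ⬝ᵥ a) * (b ⬝ᵥ b)) := by
  rw [InnerProductGeometry.cos_angle, div_pow, mul_pow, ← real_inner_self_eq_norm_sq,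
    ← real_inner_self_eq_norm_sq]
  simp only [EuclideanSpace.inner_toLp_toLp, star_trivial, dotProduct_comm b a]

theorem distPtLine_eq (l : Fin 3 → ℝ) (y : Fin 2 → ℝ) :
    distPtLine l y = |l ⬝ᵥ homLift y| / √(l 0 ^ 2 + l 1 ^ 2) := by
  simp [distPtLine, homLift, dotProduct, Fin.sum_univ_three]

theorem sqrt_sq_add_sq_ne_zero {l : Fin 3 → ℝ} (hl : (l 0, l 1) ≠ (0, 0)) :
    √(l 0 ^ 2 + l 1 ^ 2) ≠ 0 := by
  rw [Ne, Real.sqrt_eq_zero (by positivity),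
    add_eq_zero_iff_of_nonneg (sq_nonneg _) (sq_nonneg _), sq_eq_zero_iff, sq_eq_zero_iff]
  contrapose! hl
  rw [hl.1, hl.2]

theorem distPtLine_cross_ratio {l₁ l₂ : Fin 3 → ℝ} (hl₁ : (l₁ 0, l₁ 1) ≠ (0, 0))
    (hl₂ : (l₂ 0, l₂ 1) ≠ (0, 0)) (x₁ x₂ : Fin 2 → ℝ) :
    distPtLine l₂ x₁ * distPtLine l₁ x₂ / (distPtLine l₁ x₁ * distPtLine l₂ x₂) =
      |l₂ ⬝ᵥ homLift x₁| * |l₁ ⬝ᵥ homLift x₂| /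
        (|l₁ ⬝ᵥ homLift x₁| * |l₂ ⬝ᵥ homLift x₂|) := by
  have h₁ := sqrt_sq_add_sq_ne_zero hl₁
  have h₂ := sqrt_sq_add_sq_ne_zero hl₂
  simp only [distPtLine_eq]
  field_simp

theorem cos_sq_angle_eq_dist_ratio_general (K : Matrix (Fin 3) (Fin 3) ℝ)
    (hK : IsUnit K.det)
    (D C S : Matrix (Fin 3) (Fin 3) ℝ)
    (hD : D = Matrix.diagonal ![1, 1, -1])
    (hC : C = (Kᵀ)⁻¹ * D * K⁻¹)
    (hS : S = K * D * K⁻¹)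
    (x₁ x₂ : Fin 2 → ℝ) (l₁ l₂ : Fin 3 → ℝ)
    (hl₁ : l₁ = C.mulVec (S.mulVec (homLift x₁)))
    (hl₂ : l₂ = C.mulVec (S.mulVec (homLift x₂)))
    (hline₁ : (l₁ 0, l₁ 1) ≠ (0, 0))
    (hline₂ : (l₂ 0, l₂ 1) ≠ (0, 0))
    (θ : ℝ)
    (hθ : θ = InnerProductGeometry.angle
        ((WithLp.equiv 2 (Fin 3 → ℝ)).symm (K⁻¹.mulVec (homLift x₁)))
        ((WithLp.equiv 2 (Fin 3 → ℝ)).symm (K⁻¹.mulVec (homLift x₂)))) :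
    Real.cos θ ^ 2 =
      (distPtLine l₂ x₁ * distPtLine l₁ x₂) / (distPtLine l₁ x₁ * distPtLine l₂ x₂) := by
  have hDD : D * D = 1 := by
    rw [hD, diagonal_mul_diagonal, ← diagonal_one]
    congr 1
    funext i
    fin_cases i <;> norm_num
  have hCS : C * S = K⁻¹ᵀ * K⁻¹ := by
    rw [hC, hS, transpose_inv_mul_mul_inv_mul_mul_mul_inv hK hDD]
  have hpolar : ∀ x y, C *ᵥ (S *ᵥ homLift x) ⬝ᵥ homLift y =
      K⁻¹ *ᵥ homLift x ⬝ᵥ K⁻¹ *ᵥ homLift y := fun x y ↦ by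
    rw [mulVec_mulVec, hCS, transpose_mul_self_mulVec_dotProduct]
  have hself : ∀ v : Fin 3 → ℝ, |v ⬝ᵥ v| = v ⬝ᵥ v := fun v ↦
    abs_of_nonneg (dotProduct_self_star_nonneg _)
  rw [distPtLine_cross_ratio hline₁ hline₂, hl₁, hl₂, hpolar, hpolar, hpolar, hpolar, hself,
    hself, dotProduct_comm (K⁻¹ *ᵥ homLift x₂), abs_mul_abs_self, ← sq, hθ,
    WithLp.equiv_symm_apply, cos_sq_angle_toLp]

/-- `cos²θ` of the angle `θ` between the rays of two image points `x₁, x₂` is the ratio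
of products of distances to the reflected polars `l₁ = C S x̂₁` and `l₂ = C S x̂₂`. -/
theorem cos_sq_angle_eq_dist_ratio (K : Matrix (Fin 3) (Fin 3) ℝ)
    (hK : IsUnit K.det) (hKrow : K 2 = ![0, 0, 1])
    (D C S : Matrix (Fin 3) (Fin 3) ℝ)
    (hD : D = Matrix.diagonal ![1, 1, -1])
    (hC : C = (Kᵀ)⁻¹ * D * K⁻¹)
    (hS : S = K * D * K⁻¹)
    (x₁ x₂ : Fin 2 → ℝ) (l₁ l₂ : Fin 3 → ℝ)
    (hl₁ : l₁ = C.mulVec (S.mulVec (homLift x₁)))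
    (hl₂ : l₂ = C.mulVec (S.mulVec (homLift x₂)))
    (hline₁ : (l₁ 0, l₁ 1) ≠ (0, 0))
    (hline₂ : (l₂ 0, l₂ 1) ≠ (0, 0))
    (hnot₁ : l₁ ⬝ᵥ homLift x₁ ≠ 0)
    (hnot₂ : l₂ ⬝ᵥ homLift x₂ ≠ 0)
    (θ : ℝ)
    (hθ : θ = InnerProductGeometry.angle
        ((WithLp.equiv 2 (Fin 3 → ℝ)).symm (K⁻¹.mulVec (homLift x₁)))
        ((WithLp.equiv 2 (Fin 3 → ℝ)).symm (K⁻¹.mulVec (homLift x₂)))) :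
    Real.cos θ ^ 2 =
      (distPtLine l₂ x₁ * distPtLine l₁ x₂) / (distPtLine l₁ x₁ * distPtLine l₂ x₂) :=
  cos_sq_angle_eq_dist_ratio_general K hK D C S hD hC hS x₁ x₂ l₁ l₂ hl₁ hl₂ hline₁ hline₂ θ hθ
end

section
/- In Euclidean ℝ³, let the image plane be {z = 0}, the principal point P = (0,0,0), and the camera centre C′ = (0,0,f) with f > 0. Let L be a line contained in the image plane, O the foot of the perpendicular from P to L, and d = ‖O‖ > 0. Let C = O − (√(f² + d²)/d)·O be the conformal point of L. Then for every point A ∈ L, dist(C, A) = dist(C′, A). -/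
open scoped RealInnerProductSpace

/-!
Put `s = √(f² + d²)/d`, so that `C = (1 - s) • O`. Since `O` is the foot of the perpendicular
from `0` to `L`, every `A ∈ L` satisfies `⟪A, O⟫ = ‖O‖²`, and expanding gives
`‖C - A‖² = (s² - 1) d² + ‖A‖² = f² + ‖A‖²`. On the other hand `C'` is orthogonal to the
image plane, so Pythagoras gives `‖C' - A‖² = f² + ‖A‖²` as well.
-/

section InnerProductSpace

variable {V : Type*} [NormedAddCommGroup V] [InnerProductSpace ℝ V]

lemma inner_eq_norm_sq_of_inner_sub_eq_zero {A O : V} (h : ⟪A - O, O⟫ = 0) :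
    ⟪A, O⟫ = ‖O‖ ^ 2 := by
  rwa [inner_sub_left, real_inner_self_eq_norm_sq, sub_eq_zero] at h

lemma norm_sub_smul_sub_sq {A O : V} (h : ⟪A - O, O⟫ = 0) (s : ℝ) :
    ‖(O - s • O) - A‖ ^ 2 = (s ^ 2 - 1) * ‖O‖ ^ 2 + ‖A‖ ^ 2 := by
  have hAO := inner_eq_norm_sq_of_inner_sub_eq_zero h
  rw [show O - s • O = (1 - s) • O by rw [sub_smul, one_smul], norm_sub_sq_real, norm_smul,
    real_inner_smul_left, real_inner_comm, hAO, Real.norm_eq_abs, mul_pow, sq_abs]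
  ring

end InnerProductSpace

lemma sq_div_sub_one_mul_sq {f d : ℝ} (hd : d ≠ 0) :
    ((Real.sqrt (f ^ 2 + d ^ 2) / d) ^ 2 - 1) * d ^ 2 = f ^ 2 := by
  rw [div_pow, Real.sq_sqrt (by positivity)]
  field_simp
  ring

lemma norm_vec_zero_zero_sub_sq {f : ℝ} {A : EuclideanSpace ℝ (Fin 3)} (hA : A 2 = 0) :
    ‖(WithLp.equiv 2 (Fin 3 → ℝ)).symm ![0, 0, f] - A‖ ^ 2 = f ^ 2 + ‖A‖ ^ 2 := by
  have horth : ⟪(WithLp.equiv 2 (Fin 3 → ℝ)).symm ![0, 0, f], A⟫ = 0 := by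
    simp [PiLp.inner_apply, Fin.sum_univ_three, hA]
  rw [norm_sub_sq_real, horth, EuclideanSpace.norm_sq_eq]
  simp [Fin.sum_univ_three]

theorem conformal_point_equidistant_general (f : ℝ)
    (L : AffineSubspace ℝ (EuclideanSpace ℝ (Fin 3)))
    (hLplane : ∀ x ∈ L, x 2 = 0)
    (O : EuclideanSpace ℝ (Fin 3))
    (hfoot : ∀ x ∈ L, ⟪x - O, O⟫ = (0 : ℝ))
    (d : ℝ) (hd : d = ‖O‖) (hdpos : 0 < d)
    (C C' : EuclideanSpace ℝ (Fin 3))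
    (hC : C = O - (Real.sqrt (f ^ 2 + d ^ 2) / d) • O)
    (hC' : C' = (WithLp.equiv 2 (Fin 3 → ℝ)).symm ![0, 0, f]) :
    ∀ A ∈ L, dist C A = dist C' A := by
  intro A hA
  have hCA : ‖C - A‖ ^ 2 = f ^ 2 + ‖A‖ ^ 2 := by
    rw [hC, norm_sub_smul_sub_sq (hfoot A hA), ← hd, sq_div_sub_one_mul_sq hdpos.ne']
  have hC'A : ‖C' - A‖ ^ 2 = f ^ 2 + ‖A‖ ^ 2 := hC' ▸ norm_vec_zero_zero_sub_sq (hLplane A hA)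
  rw [dist_eq_norm, dist_eq_norm]
  exact (pow_left_inj₀ (norm_nonneg _) (norm_nonneg _) two_ne_zero).mp (hCA.trans hC'A.symm)

/-- The conformal point `C` of a line `L` in the image plane `{z = 0}` is equidistant
with the camera centre `C' = (0,0,f)` from every point `A` of `L`. Here `O` is the foot
of the perpendicular from the principal point `P = 0` to `L`, `d = ‖O‖ > 0`, and
`C = O - (√(f² + d²)/d) • O`. -/
theorem conformal_point_equidistant (f : ℝ) (hf : 0 < f)
    (L : AffineSubspace ℝ (EuclideanSpace ℝ (Fin 3)))
    (hLline : Module.finrank ℝ L.direction = 1)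
    (hLplane : ∀ x ∈ L, x 2 = 0)
    (O : EuclideanSpace ℝ (Fin 3)) (hO : O ∈ L)
    (hfoot : ∀ x ∈ L, ⟪x - O, O⟫ = (0 : ℝ))
    (d : ℝ) (hd : d = ‖O‖) (hdpos : 0 < d)
    (C C' : EuclideanSpace ℝ (Fin 3))
    (hC : C = O - (Real.sqrt (f ^ 2 + d ^ 2) / d) • O)
    (hC' : C' = (WithLp.equiv 2 (Fin 3 → ℝ)).symm ![0, 0, f]) :
    ∀ A ∈ L, dist C A = dist C' A :=
  conformal_point_equidistant_general f L hLplane O hfoot d hd hdpos C C' hC hC'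
end

section
/- In Euclidean ℝ³, let the image plane be {z = 0}, the principal point P = (0,0,0), the camera centre C′ = (0,0,f) with f > 0, L a line in the image plane with foot of perpendicular O from P and d = ‖O‖ > 0, and C = O − (√(f² + d²)/d)·O the conformal point of L. Then for all points A, B ∈ L, the angle ∠ A C B equals the angle ∠ A C′ B. That is, the angle between the rays from the camera centre to any two points of L can be measured in the image plane at the conformal point. -/
open scoped RealInnerProductSpace
open EuclideanGeometry

/-!
For `A, B ∈ L` the vectors `A - O`, `B - O` are orthogonal to both `O - C` and `O - C'`, so
`⟪A - X, B - X⟫ = ⟪A - O, B - O⟫ + ‖O - X‖²` for `X = C, C'`: the angles subtended at `X`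
depend only on `dist O X`. Both `C` and `C'` lie at distance `√(f² + d²)` from `O` (for `C'` by
Pythagoras, as `O ⊥ C'`).
-/

section OrthogonalOffset

variable {V P : Type*} [NormedAddCommGroup V] [InnerProductSpace ℝ V] [MetricSpace P]
  [NormedAddTorsor V P]

theorem inner_add_add_eq_of_inner_eq_zero {u v w : V} (hu : ⟪u, w⟫ = 0) (hv : ⟪v, w⟫ = 0) :
    ⟪u + w, v + w⟫ = ⟪u, v⟫ + ‖w‖ ^ 2 := by
  rw [inner_add_left, inner_add_right, inner_add_right, real_inner_comm v w, hu, hv,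
    real_inner_self_eq_norm_sq]
  ring

theorem inner_vsub_vsub_eq_of_orthogonal {S : Set P} {Z X : P}
    (hX : ∀ a ∈ S, ⟪a -ᵥ Z, Z -ᵥ X⟫ = 0) {a b : P} (ha : a ∈ S) (hb : b ∈ S) :
    ⟪a -ᵥ X, b -ᵥ X⟫ = ⟪a -ᵥ Z, b -ᵥ Z⟫ + dist Z X ^ 2 := by
  rw [← vsub_add_vsub_cancel a Z X, ← vsub_add_vsub_cancel b Z X, dist_eq_norm_vsub V]
  exact inner_add_add_eq_of_inner_eq_zero (hX a ha) (hX b hb)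

theorem angle_eq_angle_of_inner_vsub_eq {a b X Y : P}
    (hab : ⟪a -ᵥ X, b -ᵥ X⟫ = ⟪a -ᵥ Y, b -ᵥ Y⟫) (haa : ⟪a -ᵥ X, a -ᵥ X⟫ = ⟪a -ᵥ Y, a -ᵥ Y⟫)
    (hbb : ⟪b -ᵥ X, b -ᵥ X⟫ = ⟪b -ᵥ Y, b -ᵥ Y⟫) : ∠ a X b = ∠ a Y b := by
  rw [real_inner_self_eq_norm_sq, real_inner_self_eq_norm_sq] at haa hbb
  have hna : ‖a -ᵥ X‖ = ‖a -ᵥ Y‖ := by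
    rw [← sq_eq_sq₀ (norm_nonneg _) (norm_nonneg _), haa]
  have hnb : ‖b -ᵥ X‖ = ‖b -ᵥ Y‖ := by
    rw [← sq_eq_sq₀ (norm_nonneg _) (norm_nonneg _), hbb]
  simp only [EuclideanGeometry.angle, InnerProductGeometry.angle, hab, hna, hnb]

theorem angle_eq_angle_of_dist_eq_of_orthogonal {S : Set P} {Z X Y : P}
    (hX : ∀ a ∈ S, ⟪a -ᵥ Z, Z -ᵥ X⟫ = 0) (hY : ∀ a ∈ S, ⟪a -ᵥ Z, Z -ᵥ Y⟫ = 0)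
    (hXY : dist Z X = dist Z Y) {a b : P} (ha : a ∈ S) (hb : b ∈ S) :
    ∠ a X b = ∠ a Y b := by
  have hinner : ∀ p ∈ S, ∀ q ∈ S, ⟪p -ᵥ X, q -ᵥ X⟫ = ⟪p -ᵥ Y, q -ᵥ Y⟫ := fun p hp q hq => by
    rw [inner_vsub_vsub_eq_of_orthogonal hX hp hq, inner_vsub_vsub_eq_of_orthogonal hY hp hq, hXY]
  exact angle_eq_angle_of_inner_vsub_eq (hinner a ha b hb) (hinner a ha a ha) (hinner b hb b hb)

end OrthogonalOffset

theorem WithLp.equiv_symm_vecCons_zero_zero (c : ℝ) :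
    (WithLp.equiv 2 (Fin 3 → ℝ)).symm ![0, 0, c] = EuclideanSpace.single 2 c := by
  ext i
  fin_cases i <;> simp

theorem angle_at_conformal_point_eq_angle_at_centre_general (f : ℝ)
    (L : AffineSubspace ℝ (EuclideanSpace ℝ (Fin 3)))
    (hLplane : ∀ x ∈ L, x 2 = 0)
    (O : EuclideanSpace ℝ (Fin 3)) (hO : O ∈ L)
    (hfoot : ∀ x ∈ L, ⟪x - O, O⟫ = (0 : ℝ))
    (d : ℝ) (hd : d = ‖O‖) (hdpos : 0 < d)
    (C C' : EuclideanSpace ℝ (Fin 3))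
    (hC : C = O - (Real.sqrt (f ^ 2 + d ^ 2) / d) • O)
    (hC' : C' = (WithLp.equiv 2 (Fin 3 → ℝ)).symm ![0, 0, f]) :
    ∀ A ∈ L, ∀ B ∈ L, ∠ A C B = ∠ A C' B := by
  rw [WithLp.equiv_symm_vecCons_zero_zero] at hC'
  have hOC : O - C = (Real.sqrt (f ^ 2 + d ^ 2) / d) • O := by rw [hC, sub_sub_cancel]
  have hC'_perp : ∀ x ∈ L, ⟪x, C'⟫ = 0 := fun x hx => by
    simp [hC', EuclideanSpace.inner_single_right, hLplane x hx]
  have hOC'_sq : ‖O - C'‖ ^ 2 = f ^ 2 + d ^ 2 := by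
    rw [norm_sub_sq_real, hC'_perp O hO, hC', PiLp.norm_single, hd, Real.norm_eq_abs, sq_abs]
    ring
  have hdist : dist O C = dist O C' := by
    rw [dist_eq_norm, dist_eq_norm, hOC, norm_smul, Real.norm_of_nonneg (by positivity), ← hd,
      div_mul_cancel₀ _ hdpos.ne', ← hOC'_sq, Real.sqrt_sq (norm_nonneg _)]
  intro A hA B hB
  refine angle_eq_angle_of_dist_eq_of_orthogonal (S := L) (Z := O) (fun a ha => ?_)
    (fun a ha => ?_) hdist hA hB
  · rw [vsub_eq_sub, vsub_eq_sub, hOC, inner_smul_right, hfoot a ha, mul_zero]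
  · rw [vsub_eq_sub, vsub_eq_sub, inner_sub_right, hfoot a ha, inner_sub_left, hC'_perp a ha,
      hC'_perp O hO, sub_self, sub_self]

/-- Angles subtended at the conformal point `C` of a line `L` in the image plane equal
the angles subtended at the camera centre `C' = (0,0,f)`: for all `A, B ∈ L`,
`∠ A C B = ∠ A C' B`. -/
theorem angle_at_conformal_point_eq_angle_at_centre (f : ℝ) (hf : 0 < f)
    (L : AffineSubspace ℝ (EuclideanSpace ℝ (Fin 3)))
    (hLline : Module.finrank ℝ L.direction = 1)
    (hLplane : ∀ x ∈ L, x 2 = 0)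
    (O : EuclideanSpace ℝ (Fin 3)) (hO : O ∈ L)
    (hfoot : ∀ x ∈ L, ⟪x - O, O⟫ = (0 : ℝ))
    (d : ℝ) (hd : d = ‖O‖) (hdpos : 0 < d)
    (C C' : EuclideanSpace ℝ (Fin 3))
    (hC : C = O - (Real.sqrt (f ^ 2 + d ^ 2) / d) • O)
    (hC' : C' = (WithLp.equiv 2 (Fin 3 → ℝ)).symm ![0, 0, f]) :
    ∀ A ∈ L, ∀ B ∈ L, ∠ A C B = ∠ A C' B :=
  angle_at_conformal_point_eq_angle_at_centre_general f L hLplane O hO hfoot d hd hdpos C C' hC hC'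
end

section
/- Let f > 0 and let v₁, v₂, v₃ ∈ ℝ² be three image points of a square-pixel camera with principal point p ∈ ℝ² and focal length f whose back-projected rays are mutually orthogonal, i.e. ⟨vᵢ − p, vⱼ − p⟩ + f² = 0 for all i ≠ j. Then ⟨v₁ − p, v₂ − v₃⟩ = 0, ⟨v₂ − p, v₃ − v₁⟩ = 0 and ⟨v₃ − p, v₁ − v₂⟩ = 0; that is, the principal point p (the centre of the calibrating conic) is the orthocentre of the triangle formed by the three mutually orthogonal vanishing points. -/
open scoped RealInnerProductSpace

theorem inner_sub_eq_zero_of_inner_sub_eq {E : Type*} [NormedAddCommGroup E]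
    [InnerProductSpace ℝ E] {p a b c : E} (h : ⟪a - p, b - p⟫ = ⟪a - p, c - p⟫) :
    ⟪a - p, b - c⟫ = 0 := by
  rw [← sub_sub_sub_cancel_right b c p, inner_sub_right, h, sub_self]

theorem principal_point_is_orthocentre_general (f : ℝ)
    (p v₁ v₂ v₃ : EuclideanSpace ℝ (Fin 2))
    (h12 : ⟪v₁ - p, v₂ - p⟫ + f ^ 2 = (0 : ℝ))
    (h13 : ⟪v₁ - p, v₃ - p⟫ + f ^ 2 = (0 : ℝ))
    (h23 : ⟪v₂ - p, v₃ - p⟫ + f ^ 2 = (0 : ℝ)) :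
    ⟪v₁ - p, v₂ - v₃⟫ = (0 : ℝ) ∧ ⟪v₂ - p, v₃ - v₁⟫ = (0 : ℝ) ∧
      ⟪v₃ - p, v₁ - v₂⟫ = (0 : ℝ) := by
  have h21 := real_inner_comm (v₁ - p) (v₂ - p)
  have h31 := real_inner_comm (v₁ - p) (v₃ - p)
  have h32 := real_inner_comm (v₂ - p) (v₃ - p)
  exact ⟨inner_sub_eq_zero_of_inner_sub_eq (by linarith),
    inner_sub_eq_zero_of_inner_sub_eq (by linarith),
    inner_sub_eq_zero_of_inner_sub_eq (by linarith)⟩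

/-- If the back-projected rays of three image points `v₁, v₂, v₃` of a square-pixel
camera with principal point `p` and focal length `f` are mutually orthogonal
(`⟪vᵢ - p, vⱼ - p⟫ + f² = 0` for `i ≠ j`), then `p` is the orthocentre of the triangle
`v₁ v₂ v₃`. -/
theorem principal_point_is_orthocentre (f : ℝ) (hf : 0 < f)
    (p v₁ v₂ v₃ : EuclideanSpace ℝ (Fin 2))
    (h12 : ⟪v₁ - p, v₂ - p⟫ + f ^ 2 = (0 : ℝ))
    (h13 : ⟪v₁ - p, v₃ - p⟫ + f ^ 2 = (0 : ℝ))
    (h23 : ⟪v₂ - p, v₃ - p⟫ + f ^ 2 = (0 : ℝ)) :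
    ⟪v₁ - p, v₂ - v₃⟫ = (0 : ℝ) ∧ ⟪v₂ - p, v₃ - v₁⟫ = (0 : ℝ) ∧
      ⟪v₃ - p, v₁ - v₂⟫ = (0 : ℝ) :=
  principal_point_is_orthocentre_general f p v₁ v₂ v₃ h12 h13 h23
end

section
/- Let f > 0, let P, A, B ∈ ℝ² be points with ⟨A − P, B − P⟩ + f² = 0 (the rays of A and B through a square-pixel camera with principal point P and focal length f are orthogonal), and let O be the foot of the perpendicular from P to the line through A and B (assume A ≠ B). Then O lies strictly between A and B, and f² = ‖A − O‖·‖B − O‖ − ‖P − O‖². That is, the conformal-point construction recovers the focal length as f² = ab − d² where a = |AO|, b = |OB|, d = |OP|. -/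
open scoped RealInnerProductSpace

/-!
Write `O = A + t • (B - A)`. Since `P - O` is orthogonal to the line, expanding
`⟪A - P, B - P⟫` with `A - P = -t • (B - A) - (P - O)` and `B - P = (1 - t) • (B - A) - (P - O)`
gives `⟪A - P, B - P⟫ = ‖P - O‖² - t (1 - t) ‖B - A‖²`. The orthogonality of the rays then reads
`f² + ‖P - O‖² = t (1 - t) ‖B - A‖²`, whose left side is positive, so `0 < t < 1`; for such `t`,
`t (1 - t) ‖B - A‖²` is exactly `‖A - O‖ · ‖B - O‖`.
-/

section FootOfPerpendicular

variable {E : Type*} [NormedAddCommGroup E] [InnerProductSpace ℝ E] {P A B O : E} {t : ℝ}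

lemma sub_eq_neg_smul_of_eq_add_smul (hO : O = A + t • (B - A)) : A - O = (-t) • (B - A) := by
  rw [hO]; module

lemma sub_eq_one_sub_smul_of_eq_add_smul (hO : O = A + t • (B - A)) :
    B - O = (1 - t) • (B - A) := by
  rw [hO]; module

lemma inner_sub_sub_of_eq_add_smul_of_inner_eq_zero (hO : O = A + t • (B - A))
    (hperp : ⟪P - O, B - A⟫ = 0) :
    ⟪A - P, B - P⟫ = ‖P - O‖ ^ 2 - t * (1 - t) * ‖B - A‖ ^ 2 := by
  have hA : A - P = (-t) • (B - A) - (P - O) := by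
    rw [← sub_eq_neg_smul_of_eq_add_smul hO]; abel
  have hB : B - P = (1 - t) • (B - A) - (P - O) := by
    rw [← sub_eq_one_sub_smul_of_eq_add_smul hO]; abel
  rw [hA, hB]
  generalize B - A = u at hperp ⊢
  generalize P - O = w at hperp ⊢
  simp only [inner_sub_left, inner_sub_right, real_inner_smul_left, real_inner_smul_right,
    real_inner_comm w u, hperp, real_inner_self_eq_norm_sq]
  ring

lemma norm_sub_mul_norm_sub_of_eq_add_smul (hO : O = A + t • (B - A)) (ht₀ : 0 ≤ t)
    (ht₁ : t ≤ 1) : ‖A - O‖ * ‖B - O‖ = t * (1 - t) * ‖B - A‖ ^ 2 := by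
  rw [sub_eq_neg_smul_of_eq_add_smul hO, sub_eq_one_sub_smul_of_eq_add_smul hO, norm_smul,
    norm_smul, Real.norm_eq_abs, Real.norm_eq_abs, abs_neg, abs_of_nonneg ht₀,
    abs_of_nonneg (sub_nonneg.mpr ht₁)]
  ring

end FootOfPerpendicular

theorem focal_length_from_conformal_construction_general (f : ℝ) (hf : 0 < f)
    (P A B O : EuclideanSpace ℝ (Fin 2))
    (horth : ⟪A - P, B - P⟫ + f ^ 2 = (0 : ℝ))
    (hOline : ∃ t : ℝ, O = A + t • (B - A))
    (hOperp : ⟪P - O, B - A⟫ = (0 : ℝ)) :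
    (∃ t : ℝ, 0 < t ∧ t < 1 ∧ O = A + t • (B - A)) ∧
      f ^ 2 = ‖A - O‖ * ‖B - O‖ - ‖P - O‖ ^ 2 := by
  obtain ⟨t, hO⟩ := hOline
  have hf2 : f ^ 2 = t * (1 - t) * ‖B - A‖ ^ 2 - ‖P - O‖ ^ 2 := by
    linarith [inner_sub_sub_of_eq_add_smul_of_inner_eq_zero hO hOperp]
  have hpos : 0 < t * (1 - t) * ‖B - A‖ ^ 2 := by nlinarith [pow_pos hf 2]
  have ht : 0 < t * (1 - t) := pos_of_mul_pos_left hpos (sq_nonneg _)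
  have ht₀ : 0 < t := by nlinarith
  have ht₁ : t < 1 := by nlinarith
  refine ⟨⟨t, ht₀, ht₁, hO⟩, ?_⟩
  rw [norm_sub_mul_norm_sub_of_eq_add_smul hO ht₀.le ht₁.le, hf2]

/-- If image points `A, B` have orthogonal back-projected rays
(`⟪A - P, B - P⟫ + f² = 0`) for a square-pixel camera with principal point `P` and
focal length `f > 0`, and `O` is the foot of the perpendicular from `P` to the line
`AB`, then `O` lies strictly between `A` and `B` and `f² = ‖A - O‖·‖B - O‖ - ‖P - O‖²`. -/
theorem focal_length_from_conformal_construction (f : ℝ) (hf : 0 < f)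
    (P A B O : EuclideanSpace ℝ (Fin 2)) (hAB : A ≠ B)
    (horth : ⟪A - P, B - P⟫ + f ^ 2 = (0 : ℝ))
    (hOline : ∃ t : ℝ, O = A + t • (B - A))
    (hOperp : ⟪P - O, B - A⟫ = (0 : ℝ)) :
    (∃ t : ℝ, 0 < t ∧ t < 1 ∧ O = A + t • (B - A)) ∧
      f ^ 2 = ‖A - O‖ * ‖B - O‖ - ‖P - O‖ ^ 2 :=
  focal_length_from_conformal_construction_general f hf P A B O horth hOline hOperp
end

section
/- Let P, A, B ∈ ℝ² with A ≠ P and A ≠ B, let O be the foot of the perpendicular from P to the line through A and B, and suppose O lies strictly between A and B. Set a = ‖A − O‖, b = ‖B − O‖, d = ‖P − O‖, h = ‖A − P‖, and let x = ⟨B − P, (P − A)/h⟩ be the signed length of the projection of B − P onto the direction from A towards P. Then h·x = a·b − d²; i.e., the focal-length estimates f² = xh from the reflected-polar construction and f² = ab − d² from the conformal-point construction coincide. -/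
open scoped RealInnerProductSpace

section InnerProduct

variable {F : Type*} [NormedAddCommGroup F] [InnerProductSpace ℝ F]

theorem SameRay.inner_eq_norm_mul_norm {x y : F} (h : SameRay ℝ x y) : ⟪x, y⟫ = ‖x‖ * ‖y‖ :=
  inner_eq_norm_mul_iff_real.2 h.norm_smul_eq.symm

theorem norm_mul_inner_inv_norm_smul (w u : F) : ‖u‖ * ⟪w, ‖u‖⁻¹ • u⟫ = ⟪w, u⟫ := by
  rcases eq_or_ne u 0 with rfl | hu
  · simp
  · rw [real_inner_smul_right, mul_inv_cancel_left₀ (norm_ne_zero_iff.2 hu)]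

/-- Split both vectors at `O`: `O - A` and `B - O` lie on one ray and are orthogonal to `P - O`. -/
theorem inner_sub_sub_eq_of_wbtw_of_inner_eq_zero {P A B O : F} (hO : Wbtw ℝ A O B)
    (hperp : ⟪P - O, B - A⟫ = 0) :
    ⟪B - P, P - A⟫ = ‖A - O‖ * ‖B - O‖ - ‖P - O‖ ^ 2 := by
  have hray : SameRay ℝ (O - A) (B - O) := hO.sameRay_vsub
  have hperpOA : ⟪P - O, O - A⟫ = 0 := by
    obtain ⟨t, -, rfl⟩ := hO
    rw [← vsub_eq_sub _ A, AffineMap.lineMap_vsub_left, vsub_eq_sub, real_inner_smul_right, hperp,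
      mul_zero]
  have hperpBO : ⟪P - O, B - O⟫ = 0 := by
    obtain ⟨t, -, rfl⟩ := hO
    rw [← vsub_eq_sub B, AffineMap.right_vsub_lineMap, vsub_eq_sub, real_inner_smul_right, hperp,
      mul_zero]
  have hBP : B - P = (B - O) - (P - O) := by abel
  have hPA : P - A = (P - O) + (O - A) := by abel
  rw [hBP, hPA, inner_sub_left, inner_add_right, inner_add_right, real_inner_comm, hperpBO,
    hperpOA, real_inner_self_eq_norm_sq, real_inner_comm, hray.inner_eq_norm_mul_norm, norm_sub_rev O]
  ring

end InnerProduct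

theorem focal_length_estimates_agree_general
    (P A B O : EuclideanSpace ℝ (Fin 2))
    (hObtw : ∃ t : ℝ, 0 < t ∧ t < 1 ∧ O = A + t • (B - A))
    (hOperp : ⟪P - O, B - A⟫ = (0 : ℝ))
    (a b d h x : ℝ)
    (ha : a = ‖A - O‖) (hb : b = ‖B - O‖) (hd : d = ‖P - O‖) (hh : h = ‖A - P‖)
    (hx : x = ⟪B - P, h⁻¹ • (P - A)⟫) :
    h * x = a * b - d ^ 2 := by
  obtain ⟨t, ht0, ht1, rfl⟩ := hObtw
  have hO : Wbtw ℝ A (A + t • (B - A)) B :=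
    ⟨t, ⟨ht0.le, ht1.le⟩, by rw [AffineMap.lineMap_apply, vsub_eq_sub, vadd_eq_add, add_comm]⟩
  rw [hx, hh, norm_sub_rev, norm_mul_inner_inv_norm_smul,
    inner_sub_sub_eq_of_wbtw_of_inner_eq_zero hO hOperp, ha, hb, hd]

/-- With `O` the foot of the perpendicular from `P` to the line `AB`, lying strictly
between `A` and `B`, and `a = ‖A - O‖`, `b = ‖B - O‖`, `d = ‖P - O‖`, `h = ‖A - P‖`,
`x = ⟪B - P, (P - A)/h⟫`, the two focal-length estimates agree: `h·x = a·b - d²`. -/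
theorem focal_length_estimates_agree
    (P A B O : EuclideanSpace ℝ (Fin 2)) (hAP : A ≠ P) (hAB : A ≠ B)
    (hObtw : ∃ t : ℝ, 0 < t ∧ t < 1 ∧ O = A + t • (B - A))
    (hOperp : ⟪P - O, B - A⟫ = (0 : ℝ))
    (a b d h x : ℝ)
    (ha : a = ‖A - O‖) (hb : b = ‖B - O‖) (hd : d = ‖P - O‖) (hh : h = ‖A - P‖)
    (hx : x = ⟪B - P, h⁻¹ • (P - A)⟫) :
    h * x = a * b - d ^ 2 :=
  focal_length_estimates_agree_general P A B O hObtw hOperp a b d h x ha hb hd hh hx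
end
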